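/- Let A and B be real tensors of order m and dimension n with m ≥ 2 and n ≥ 1. If {A,B} is a strong P tensor pair, then m is even. -/

import Mathlib

open Finset

/-- A real tensor of order `m` and dimension `n`, indexed by a first index in `Fin n`
and `m - 1` further indices in `Fin n`. -/
abbrev Tensor (m n : ℕ) : Type := Fin n → (Fin (m - 1) → Fin n) → ℝ

/-- `tApp A x` is the vector `A x^{m-1}` with `i`-th component
`∑_{i₂,…,i_m} a_{i i₂ … i_m} x_{i₂} ⋯ x_{i_m}`. -/
noncomputable def tApp {m n : ℕ} (A : Tensor m n) (x : Fin n → ℝ) : Fin n → ℝ :=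
  fun i => ∑ j : Fin (m - 1) → Fin n, A i j * ∏ k, x (j k)

/-- The identity tensor: entries `1` when all indices coincide, `0` otherwise,
so that `tApp (idT m n) x = x^{[m-1]}`. -/
def idT (m n : ℕ) : Tensor m n :=
  fun i j => if (∀ k, j k = i) then 1 else 0

/-- The solution set of the horizontal tensor complementarity problem HTCP(A,B,q). -/
def SOL {m n : ℕ} (A B : Tensor m n) (q : Fin n → ℝ) :
    Set ((Fin n → ℝ) × (Fin n → ℝ)) :=
  {p | p.1 ⊓ p.2 = 0 ∧ tApp A p.1 - tApp B p.2 = q}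

/-- `{A,B}` is an R0 tensor pair. -/
def R0Pair {m n : ℕ} (A B : Tensor m n) : Prop :=
  ∀ x y : Fin n → ℝ, x ⊓ y = 0 → tApp A x - tApp B y = 0 → x = 0 ∧ y = 0

/-- `{A,B}` is a P tensor pair. -/
def PPair {m n : ℕ} (A B : Tensor m n) : Prop :=
  ∀ x y : Fin n → ℝ, x * y ≤ 0 → tApp A x - tApp B y = 0 → x = 0 ∧ y = 0

/-- `{A,B}` is a strong P tensor pair. -/
def StrongPPair {m n : ℕ} (A B : Tensor m n) : Prop :=
  ∀ x1 x2 y1 y2 : Fin n → ℝ,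
    (x1 - x2) * (y1 - y2) ≤ 0 →
    (tApp A x1 - tApp A x2) - (tApp B y1 - tApp B y2) = 0 →
    x1 = x2 ∧ y1 = y2

/-!
If `m` is odd, the map `x ↦ A x^{m-1}` is homogeneous of even degree `m - 1`, so it takes the
same value at `x` and `-x`. Choosing `y₁ = y₂` makes the sign condition of a strong P pair
trivial, so `x ↦ A x^{m-1}` would have to be injective, which fails at `x = 1` as soon as
`n ≥ 1`.
-/

theorem tApp_smul {m n : ℕ} (A : Tensor m n) (c : ℝ) (x : Fin n → ℝ) :
    tApp A (c • x) = c ^ (m - 1) • tApp A x := by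
  funext i
  simp only [tApp, Pi.smul_apply, smul_eq_mul, prod_mul_distrib, prod_const, card_univ,
    Fintype.card_fin, mul_sum]
  exact sum_congr rfl fun _ _ => by ring

theorem tApp_neg_of_even {m n : ℕ} (A : Tensor m n) (hm : Even (m - 1)) (x : Fin n → ℝ) :
    tApp A (-x) = tApp A x := by
  rw [← neg_one_smul ℝ x, tApp_smul, hm.neg_one_pow, one_smul]

theorem StrongPPair.injective_tApp_left {m n : ℕ} {A B : Tensor m n} (h : StrongPPair A B) :
    Function.Injective (tApp A) := fun x₁ x₂ hx =>
  (h x₁ x₂ 0 0 (by simp) (by simp [hx])).1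

theorem even_of_strongPPair_general (m n : ℕ) (hn : 1 ≤ n)
    (A B : Tensor m n) (h : StrongPPair A B) : Even m := by
  by_contra hodd
  have hm : Even (m - 1) := Nat.Odd.sub_odd (Nat.not_even_iff_odd.mp hodd) odd_one
  have hone : -(1 : Fin n → ℝ) = 1 :=
    h.injective_tApp_left (tApp_neg_of_even A hm 1)
  have := congrFun hone ⟨0, hn⟩
  norm_num at this

/-- a strong P tensor pair has even order. -/
theorem even_of_strongPPair (m n : ℕ) (hm : 2 ≤ m) (hn : 1 ≤ n)
    (A B : Tensor m n) (h : StrongPPair A B) : Even m :=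
  even_of_strongPPair_general m n hn A B h
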